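/- Let S be a boolean n×n matrix of silent steps, ρ a boolean termination column vector, V a surjective boolean n×N collector, and Π = S*. If VVᵀΠV = ΠV and VVᵀΠρ = Πρ, then (VᵀSV)* (Vᵀρ) = Vᵀ Π ρ. -/

import Mathlib

open Matrix

instance : CommSemiring Prop where
  add a b := a ∨ b
  add_assoc a b c := propext or_assoc
  zero := False
  zero_add a := false_or a
  add_zero a := or_false a
  add_comm a b := propext or_comm
  nsmul n p := n ≠ 0 ∧ p
  nsmul_zero p := by show ((0:ℕ) ≠ 0 ∧ p) = False; simp
  nsmul_succ n p := by
    show ((n + 1 : ℕ) ≠ 0 ∧ p) = ((n ≠ 0 ∧ p) ∨ p)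
    by_cases h : n = 0 <;> simp [h]
  mul a b := a ∧ b
  mul_assoc a b c := propext and_assoc
  one := True
  one_mul a := true_and a
  mul_one a := and_true a
  left_distrib a b c := propext and_or_left
  right_distrib a b c := propext or_and_right
  zero_mul a := false_and a
  mul_zero a := and_false a
  mul_comm a b := propext and_comm

instance {α : Type*} : CommSemiring (Set α) where
  add a b := a ∪ b
  add_assoc := Set.union_assoc
  zero := (∅ : Set α)
  zero_add := Set.empty_union
  add_zero := Set.union_empty
  add_comm := Set.union_comm
  nsmul n s := {x ∈ s | n ≠ 0}
  nsmul_zero s := by show {x ∈ s | (0:ℕ) ≠ 0} = (∅ : Set α); simp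
  nsmul_succ n s := by
    show {x ∈ s | (n + 1 : ℕ) ≠ 0} = {x ∈ s | n ≠ 0} ∪ s
    by_cases h : n = 0 <;> ext x <;> simp [h]
  mul a b := a ∩ b
  mul_assoc := Set.inter_assoc
  one := (Set.univ : Set α)
  one_mul := Set.univ_inter
  mul_one := Set.inter_univ
  left_distrib := Set.inter_union_distrib_left
  right_distrib := Set.union_inter_distrib_right
  zero_mul := Set.empty_inter
  mul_zero := Set.inter_empty
  mul_comm := Set.inter_comm

/-- Reflexive-transitive closure `S* = Σ_{k ≥ 0} S^k` of a boolean matrix. -/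
def mstar {n : ℕ} (S : Matrix (Fin n) (Fin n) Prop) : Matrix (Fin n) (Fin n) Prop :=
  Matrix.of fun i j => ∃ k : ℕ, (S ^ k) i j

/-!
Read relationally, `Πρ` is the set of states that reach a terminating state by silent steps,
and `VᵀSV` relates two classes when some member of the first steps silently to some member of
the second. Projecting a silent path onto its sequence of classes shows that `VᵀΠρ` is
contained in `(VᵀSV)* (Vᵀρ)`. Conversely, a lumped path only links possibly different members
of consecutive classes; but `VVᵀΠρ = Πρ` says that `Πρ` is a union of classes, so membership
in `Πρ` travels back along the lumped path one step at a time.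
-/

open Relation

section Lumping

variable {α β : Type*} {s : α → α → Prop} {v : α → β → Prop}

def lumpRel (v : α → β → Prop) (s : α → α → Prop) (b c : β) : Prop :=
  ∃ x y, v x b ∧ s x y ∧ v y c

theorem exists_reflTransGen_lumpRel (hv : ∀ a, ∃ b, v a b) {a a' : α} {b : β}
    (h : ReflTransGen s a a') (hab : v a b) :
    ∃ b', ReflTransGen (lumpRel v s) b b' ∧ v a' b' := by
  induction h with
  | refl => exact ⟨b, .refl, hab⟩
  | tail _ hst ih =>
    obtain ⟨b', hbb', hb'⟩ := ih
    obtain ⟨b'', hb''⟩ := hv _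
    exact ⟨b'', hbb'.tail ⟨_, _, hb', hst, hb''⟩, hb''⟩

theorem exists_of_reflTransGen_lumpRel {P : α → Prop} (hstep : ∀ x y, s x y → P y → P x)
    (hsat : ∀ x y b, v x b → v y b → P y → P x) {b b' : β}
    (h : ReflTransGen (lumpRel v s) b b') (hb' : ∃ a, v a b' ∧ P a) :
    ∃ a, v a b ∧ P a := by
  induction h using ReflTransGen.head_induction_on with
  | refl => exact hb'
  | head hbc _ ih =>
    obtain ⟨x, y, hx, hxy, hy⟩ := hbc
    obtain ⟨a, ha, hPa⟩ := ih
    exact ⟨x, hx, hstep x y hxy (hsat y a _ hy ha hPa)⟩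

theorem exists_reflTransGen_lumpRel_iff (hv : ∀ a, ∃ b, v a b) {p : α → Prop}
    (hsat : ∀ x y b, v x b → v y b → (∃ y', ReflTransGen s y y' ∧ p y') →
      ∃ x', ReflTransGen s x x' ∧ p x') (b : β) :
    (∃ b', ReflTransGen (lumpRel v s) b b' ∧ ∃ a, v a b' ∧ p a) ↔
      ∃ a, v a b ∧ ∃ a', ReflTransGen s a a' ∧ p a' := by
  constructor
  · rintro ⟨b', hbb', a, ha, hpa⟩
    refine exists_of_reflTransGen_lumpRel ?_ hsat hbb' ⟨a, ha, a, .refl, hpa⟩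
    exact fun x y hxy ⟨z, hyz, hz⟩ => ⟨z, hyz.head hxy, hz⟩
  · rintro ⟨a, ha, a', haa', hpa'⟩
    obtain ⟨b', hbb', hb'⟩ := exists_reflTransGen_lumpRel hv haa' ha
    exact ⟨b', hbb', a', hb', hpa'⟩

end Lumping

section BooleanMatrix

variable {l m o : Type*}

theorem prop_sum_iff_exists (s : Finset m) (f : m → Prop) : ∑ i ∈ s, f i ↔ ∃ i ∈ s, f i := by
  classical
  induction s using Finset.induction_on with
  | empty => exact ⟨False.elim, fun ⟨_, h, _⟩ => absurd h (Finset.notMem_empty _)⟩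
  | insert a s ha ih => rw [Finset.sum_insert ha, Finset.exists_mem_insert, ← ih]; rfl

theorem prop_mul_apply [Fintype m] (A : Matrix l m Prop) (B : Matrix m o Prop) (i : l) (k : o) :
    (A * B) i k ↔ ∃ j, A i j ∧ B j k := by
  simp only [Matrix.mul_apply, prop_sum_iff_exists, Finset.mem_univ, true_and]; rfl

theorem prop_one_apply [DecidableEq m] (i j : m) : (1 : Matrix m m Prop) i j ↔ i = j := by
  rw [Matrix.one_apply]
  split_ifs with h
  · exact ⟨fun _ => h, fun _ => trivial⟩
  · exact ⟨False.elim, h⟩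

theorem transpose_mul_mul_eq_lumpRel [Fintype l] (S : Matrix l l Prop) (V : Matrix l m Prop) :
    Vᵀ * S * V = lumpRel V S := by
  ext b c
  simp only [prop_mul_apply, Matrix.transpose_apply, lumpRel]
  exact ⟨fun ⟨y, ⟨x, hx, hxy⟩, hy⟩ => ⟨x, y, hx, hxy, hy⟩,
    fun ⟨x, y, hx, hxy, hy⟩ => ⟨y, ⟨x, hx, hxy⟩, hy⟩⟩

theorem apply_of_mul_transpose_mul_eq [Fintype l] [Fintype m] {V : Matrix l m Prop}
    {R : Matrix l o Prop} (h : V * Vᵀ * R = R) {x y : l} {b : m} (hx : V x b) (hy : V y b)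
    {k : o} (hR : R y k) : R x k := by
  rw [← h, prop_mul_apply]
  exact ⟨y, (prop_mul_apply _ _ _ _).2 ⟨b, hx, hy⟩, hR⟩

theorem mstar_apply_iff {n : ℕ} (S : Matrix (Fin n) (Fin n) Prop) (i j : Fin n) :
    mstar S i j ↔ ReflTransGen S i j := by
  constructor
  · rintro ⟨k, hk⟩
    induction k generalizing i with
    | zero => rw [pow_zero, prop_one_apply] at hk; exact hk ▸ .refl
    | succ k ih =>
      obtain ⟨a, hia, haj⟩ := (prop_mul_apply _ _ _ _).1 (pow_succ' S k ▸ hk)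
      exact .head hia (ih a haj)
  · intro h
    induction h using ReflTransGen.head_induction_on with
    | refl => exact ⟨0, (prop_one_apply _ _).2 rfl⟩
    | head hia _ ih =>
      obtain ⟨k, hk⟩ := ih
      exact ⟨k + 1, pow_succ' S k ▸ (prop_mul_apply _ _ _ _).2 ⟨_, hia, hk⟩⟩

end BooleanMatrix

theorem weak_lumping_sound_termination_general {n N : ℕ}
    (S : Matrix (Fin n) (Fin n) Prop) (ρ : Matrix (Fin n) (Fin 1) Prop)
    (V : Matrix (Fin n) (Fin N) Prop)
    (hcol : ∀ i, ∃! j, V i j)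
    (h₃ : V * Vᵀ * mstar S * ρ = mstar S * ρ) :
    mstar (Vᵀ * S * V) * (Vᵀ * ρ) = Vᵀ * mstar S * ρ := by
  have hcls : V * Vᵀ * (mstar S * ρ) = mstar S * ρ := by rwa [← Matrix.mul_assoc]
  have hreach (i z) : (mstar S * ρ) i z ↔ ∃ i', ReflTransGen S i i' ∧ ρ i' z := by
    simp only [prop_mul_apply, mstar_apply_iff]
  ext j z
  rw [Matrix.mul_assoc Vᵀ (mstar S)]
  simp only [prop_mul_apply, mstar_apply_iff, Matrix.transpose_apply]
  rw [transpose_mul_mul_eq_lumpRel]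
  refine exists_reflTransGen_lumpRel_iff (fun i => (hcol i).exists) ?_ j
  exact fun x y b hx hy =>
    (hreach x z).1 ∘ apply_of_mul_transpose_mul_eq hcls hx hy ∘ (hreach y z).2

/-- soundness of weak lumping for the termination vector:
`(VᵀSV)* (Vᵀρ) = VᵀΠρ`. -/
theorem weak_lumping_sound_termination {n N : ℕ}
    (S : Matrix (Fin n) (Fin n) Prop) (ρ : Matrix (Fin n) (Fin 1) Prop)
    (V : Matrix (Fin n) (Fin N) Prop)
    (hcol : ∀ i, ∃! j, V i j) (hsurj : ∀ j, ∃ i, V i j)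
    (h₁ : V * Vᵀ * mstar S * V = mstar S * V)
    (h₃ : V * Vᵀ * mstar S * ρ = mstar S * ρ) :
    mstar (Vᵀ * S * V) * (Vᵀ * ρ) = Vᵀ * mstar S * ρ :=
  weak_lumping_sound_termination_general S ρ V hcol h₃
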